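/- For a matroid M on a totally ordered ground set E, the four-variable expansion holds: T(M;x+w,y+z) = Σ_{S⊆E} x^{|I(S)∩S|} w^{|I(S)∩S^c|} y^{|L(S)∩S|} z^{|L(S)∩S^c|}, where for a subset S, I(S) is the set of elements e that are minimum in some cocircuit contained in S^c∪{e}, and L(S) is the set of elements e that are minimum in some circuit contained in S∪{e}. -/

import Mathlib

noncomputable section
attribute [local instance] Classical.propDecidable

namespace TutteActivities

variable {α : Type*} [DecidableEq α]

/-- `ℬ` is the family of bases of a matroid on ground set `E`:
nonempty, contained in `E`, and satisfying the basis-exchange axiom. -/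
def IsMatroidOn (E : Finset α) (ℬ : Finset (Finset α)) : Prop :=
  ℬ.Nonempty ∧ (∀ B ∈ ℬ, B ⊆ E) ∧
    ∀ B₁ ∈ ℬ, ∀ B₂ ∈ ℬ, ∀ e ∈ B₁ \ B₂, ∃ f ∈ B₂ \ B₁, insert f (B₁.erase e) ∈ ℬ

/-- A set is independent if it is contained in a basis. -/
def Indep (ℬ : Finset (Finset α)) (S : Finset α) : Prop := ∃ B ∈ ℬ, S ⊆ B

/-- A circuit is a minimal dependent subset of the ground set. -/
def Circuit (E : Finset α) (ℬ : Finset (Finset α)) (C : Finset α) : Prop :=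
  C ⊆ E ∧ ¬ Indep ℬ C ∧ ∀ D ⊂ C, Indep ℬ D

/-- A cocircuit is a minimal subset of the ground set meeting every basis. -/
def Cocircuit (E : Finset α) (ℬ : Finset (Finset α)) (C : Finset α) : Prop :=
  C ⊆ E ∧ (∀ B ∈ ℬ, (B ∩ C).Nonempty) ∧ ∀ D ⊂ C, ∃ B ∈ ℬ, B ∩ D = ∅

/-- The rank of a set `A`: the largest size of the intersection of a basis with `A`. -/
def rank (ℬ : Finset (Finset α)) (A : Finset α) : ℕ := ℬ.sup fun B => (B ∩ A).card

/-- `e` is the minimum element of `C` with respect to the order given by labels `σ`. -/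
def IsMinOf (σ : α → ℕ) (e : α) (C : Finset α) : Prop := e ∈ C ∧ ∀ g ∈ C, σ e ≤ σ g

/-- `f ∉ B` is externally active: `f` is the minimum of the fundamental circuit of `f`,
i.e. of a circuit contained in `B ∪ {f}`. -/
def ExtActive (E : Finset α) (ℬ : Finset (Finset α)) (σ : α → ℕ) (B : Finset α) (f : α) :
    Prop :=
  f ∉ B ∧ ∃ C, Circuit E ℬ C ∧ C ⊆ insert f B ∧ IsMinOf σ f C

/-- `e ∈ B` is internally active: `e` is the minimum of the fundamental cocircuit of `e`,
i.e. of a cocircuit contained in `(E \ B) ∪ {e}`. -/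
def IntActive (E : Finset α) (ℬ : Finset (Finset α)) (σ : α → ℕ) (B : Finset α) (e : α) :
    Prop :=
  e ∈ B ∧ ∃ C, Cocircuit E ℬ C ∧ C ⊆ insert e (E \ B) ∧ IsMinOf σ e C

/-- The set of externally active elements of a basis `B`. -/
def extSet (E : Finset α) (ℬ : Finset (Finset α)) (σ : α → ℕ) (B : Finset α) : Finset α :=
  E.filter (ExtActive E ℬ σ B)

/-- The set of internally active elements of a basis `B`. -/
def intSet (E : Finset α) (ℬ : Finset (Finset α)) (σ : α → ℕ) (B : Finset α) : Finset α :=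
  E.filter (IntActive E ℬ σ B)

/-- The Tutte polynomial via Whitney's corank-nullity expansion. -/
def tutte (E : Finset α) (ℬ : Finset (Finset α)) (x y : ℤ) : ℤ :=
  ∑ A ∈ E.powerset, (x - 1) ^ (rank ℬ E - rank ℬ A) * (y - 1) ^ (A.card - rank ℬ A)

/-- Gordon–Traldi internal activity for an arbitrary subset `S`:
elements `e` that are minimum in some cocircuit contained in `(E \ S) ∪ {e}`. -/
def subI (E : Finset α) (ℬ : Finset (Finset α)) (σ : α → ℕ) (S : Finset α) : Finset α :=
  E.filter fun e => ∃ C, Cocircuit E ℬ C ∧ C ⊆ insert e (E \ S) ∧ IsMinOf σ e C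

/-- Gordon–Traldi external activity for an arbitrary subset `S`:
elements `e` that are minimum in some circuit contained in `S ∪ {e}`. -/
def subL (E : Finset α) (ℬ : Finset (Finset α)) (σ : α → ℕ) (S : Finset α) : Finset α :=
  E.filter fun e => ∃ C, Circuit E ℬ C ∧ C ⊆ insert e S ∧ IsMinOf σ e C

end TutteActivities

/-!
Toggling an element of `I(S) ∪ L(S)` in or out of `S` changes neither activity set: for an
externally active `e` this is because `e` is spanned by the later elements of `S`, and because a
circuit and a cocircuit never meet in exactly one element; the internal cases are the external
ones in the dual matroid. Hence the subsets of `E` split into Boolean intervals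
`[K, K ∪ I(K) ∪ L(K)]` on which `I` and `L` are constant, and the sum of the monomial over such an
interval is `(x + w) ^ |I(K)| * (y + z) ^ |L(K)|`. So the expansion depends on `x, w, y, z` only
through `x + w` and `y + z`, and we may evaluate it at `(1, x + w - 1, y + z - 1, 1)`. There the
exponents `|I(S) \ S|` and `|L(S) ∩ S|` are the corank and the nullity of `S` (adding the elements
of `S` in decreasing order, the rank grows exactly at the elements that are not externally active),
which is Whitney's expansion.
-/

theorem Finset.forall_ssubset_coe_iff {α : Type*} {C : Finset α} {P : Set α → Prop} :
    (∀ X ⊂ (C : Set α), P X) ↔ ∀ D ⊂ C, P D := by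
  refine ⟨fun h D hD => h D (Finset.coe_ssubset.2 hD), fun h X hX => ?_⟩
  obtain ⟨D, rfl⟩ := (C.finite_toSet.subset hX.subset).exists_finset_coe
  exact h D (Finset.coe_ssubset.1 hX)

namespace Matroid

open Set

variable {α : Type*} {M : Matroid α} {σ : α → ℕ} {S T : Set α} {e f : α}

def IsExtActive (M : Matroid α) (σ : α → ℕ) (S : Set α) (e : α) : Prop :=
  ∃ C ⊆ insert e S, M.IsCircuit C ∧ e ∈ C ∧ ∀ g ∈ C, σ e ≤ σ g

/-- The circuits of `M✶` are the cocircuits of `M`: `e` is the `σ`-least element of a cocircuit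
contained in `(E \ S) ∪ {e}`. -/
def IsIntActive (M : Matroid α) (σ : α → ℕ) (S : Set α) (e : α) : Prop :=
  M✶.IsExtActive σ (M.E \ S) e

theorem IsExtActive.mem_ground (he : M.IsExtActive σ S e) : e ∈ M.E :=
  let ⟨_, _, hC, heC, _⟩ := he
  hC.subset_ground heC

theorem IsExtActive.mono (he : M.IsExtActive σ S e) (hST : S ⊆ T) : M.IsExtActive σ T e :=
  let ⟨C, hCS, hC⟩ := he
  ⟨C, hCS.trans (insert_subset_insert hST), hC⟩

theorem isExtActive_iff_mem_closure (hσ : Function.Injective σ) :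
    M.IsExtActive σ S e ↔ e ∈ M.closure {g ∈ S | σ e < σ g} := by
  rw [mem_closure_iff_exists_isCircuit (by simp)]
  constructor
  · rintro ⟨C, hCS, hC, heC, hmin⟩
    refine ⟨C, fun g hg => ?_, hC, heC⟩
    obtain rfl | hge := eq_or_ne g e
    · exact mem_insert g _
    · exact mem_insert_of_mem e ⟨(hCS hg).resolve_left hge,
        (hmin g hg).lt_of_ne fun h => hge (hσ h).symm⟩
  · rintro ⟨C, hCS, hC, heC⟩
    refine ⟨C, hCS.trans (insert_subset_insert (sep_subset _ _)), hC, heC, fun g hg => ?_⟩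
    obtain rfl | hg := hCS hg
    · exact le_rfl
    · exact hg.2.le

theorem IsIntActive.mem_ground (he : M.IsIntActive σ S e) : e ∈ M.E :=
  IsExtActive.mem_ground (M := M✶) he

theorem isIntActive_dual_iff : M✶.IsIntActive σ S e ↔ M.IsExtActive σ (M.E \ S) e := by
  simp [IsIntActive]

theorem IsExtActive.not_isIntActive (he : M.IsExtActive σ S e) : ¬ M.IsIntActive σ S e := by
  rintro ⟨K, hKS, hK, heK, -⟩
  obtain ⟨C, hCS, hC, heC, -⟩ := he
  refine hC.inter_isCocircuit_ne_singleton hK (eq_singleton_iff_unique_mem.2 ⟨⟨heC, heK⟩, ?_⟩)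
  rintro g ⟨hgC, hgK⟩
  by_contra hge
  exact ((hKS hgK).resolve_left hge).2 ((hCS hgC).resolve_left hge)

theorem IsExtActive.isExtActive_insert_iff (hσ : Function.Injective σ)
    (he : M.IsExtActive σ S e) :
    M.IsExtActive σ (insert e S) f ↔ M.IsExtActive σ (S \ {e}) f := by
  simp_rw [isExtActive_iff_mem_closure hσ]
  by_cases hfe : σ f < σ e
  · have hsub : {g ∈ S | σ e < σ g} ⊆ {g ∈ S \ {e} | σ f < σ g} :=
      fun g hg => ⟨⟨hg.1, fun (h : g = e) => hg.2.ne' (congrArg σ h)⟩, hfe.trans hg.2⟩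
    have heA := M.closure_subset_closure hsub ((isExtActive_iff_mem_closure hσ).1 he)
    have hA : {g ∈ insert e S | σ f < σ g} = insert e {g ∈ S \ {e} | σ f < σ g} := by
      ext g; obtain rfl | hg := eq_or_ne g e <;> simp [*]
    rw [hA, closure_insert_eq_of_mem_closure heA]
  · have hA : {g ∈ insert e S | σ f < σ g} = {g ∈ S \ {e} | σ f < σ g} := by
      ext g; obtain rfl | hg := eq_or_ne g e <;> simp [*]
    rw [hA]

theorem IsExtActive.isIntActive_insert_iff (hσ : Function.Injective σ)
    (he : M.IsExtActive σ S e) :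
    M.IsIntActive σ (insert e S) f ↔ M.IsIntActive σ (S \ {e}) f := by
  refine ⟨fun hf => hf.mono (sdiff_subset_sdiff_right (sdiff_subset.trans (subset_insert e S))), ?_⟩
  rintro ⟨K, hKS, hK, hfK, hKmin⟩
  obtain ⟨C, hCS, hC, heC, hCmin⟩ := he
  have heK : e ∉ K := by
    intro heK
    refine hC.inter_isCocircuit_ne_singleton hK (eq_singleton_iff_unique_mem.2 ⟨⟨heC, heK⟩, ?_⟩)
    rintro g ⟨hgC, hgK⟩
    by_contra hge
    have hgS : g ∈ S := (hCS hgC).resolve_left hge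
    obtain rfl : g = f := (hKS hgK).resolve_right fun h => h.2 ⟨hgS, hge⟩
    exact hge (hσ ((hKmin e heK).antisymm (hCmin g hgC)))
  refine ⟨K, fun g hg => ?_, hK, hfK, hKmin⟩
  obtain rfl | ⟨hgE, hgS⟩ := hKS hg
  · exact mem_insert g _
  · refine mem_insert_of_mem f ⟨hgE, fun hg' => hgS ⟨(hg').resolve_left ?_, ?_⟩⟩ <;>
      rintro rfl <;> exact heK hg

theorem IsIntActive.isIntActive_insert_iff (hσ : Function.Injective σ)
    (he : M.IsIntActive σ S e) :
    M.IsIntActive σ (insert e S) f ↔ M.IsIntActive σ (S \ {e}) f := by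
  have heE := he.mem_ground
  have h₁ : M.E \ insert e S = (M.E \ S) \ {e} := by ext; simp; tauto
  have h₂ : M.E \ (S \ {e}) = insert e (M.E \ S) := by
    ext g; obtain rfl | hg := eq_or_ne g e <;> simp [*]
  rw [IsIntActive, IsIntActive, h₁, h₂]
  exact (IsExtActive.isExtActive_insert_iff hσ he).symm

theorem IsIntActive.isExtActive_insert_iff (hσ : Function.Injective σ) (hS : S ⊆ M.E)
    (he : M.IsIntActive σ S e) :
    M.IsExtActive σ (insert e S) f ↔ M.IsExtActive σ (S \ {e}) f := by
  have heE := he.mem_ground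
  have h₁ : M.E \ insert e (M.E \ S) = S \ {e} := by
    ext g; have := @hS g; simp; tauto
  have h₂ : M.E \ ((M.E \ S) \ {e}) = insert e S := by
    ext g; have := @hS g; obtain rfl | hg := eq_or_ne g e <;> simp [*]; tauto
  have := IsExtActive.isIntActive_insert_iff (M := M✶) (f := f) hσ he
  rwa [isIntActive_dual_iff, isIntActive_dual_iff, h₁, h₂, Iff.comm] at this

theorem eRk_insert_of_mem_closure (he : e ∈ M.closure S) : M.eRk (insert e S) = M.eRk S := by
  rw [← eRk_closure_eq, closure_insert_eq_of_mem_closure he, eRk_closure_eq]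

open scoped Classical in
theorem card_filter_isExtActive_add_eRk (hσ : Function.Injective σ) (S : Finset α)
    (hS : ↑S ⊆ M.E) : ((S.filter (M.IsExtActive σ S)).card : ℕ∞) + M.eRk S = S.card := by
  induction S using Finset.induction_on_min_value σ with
  | empty => simp
  | insert a s has hmin ih =>
    rw [Finset.coe_insert] at hS ⊢
    have hlater : ∀ f ∈ s, M.IsExtActive σ (insert a ↑s) f ↔ M.IsExtActive σ s f := by
      intro f hf
      simp_rw [isExtActive_iff_mem_closure hσ]
      congr! 2
      ext g; obtain rfl | hg := eq_or_ne g a <;> simp [*, hmin f hf]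
    have ha : M.IsExtActive σ (insert a ↑s) a ↔ a ∈ M.closure s := by
      rw [isExtActive_iff_mem_closure hσ]
      congr! 2
      ext g; obtain rfl | hg := eq_or_ne g a
      · simp [has]
      · simp +contextual [hg, fun hgs => (hmin g hgs).lt_of_ne fun h => hg (hσ h).symm]
    rw [Finset.filter_insert, Finset.filter_congr hlater, Finset.card_insert_of_notMem has,
      Nat.cast_succ, ← ih ((subset_insert _ _).trans hS)]
    by_cases hcl : a ∈ M.closure s
    · rw [if_pos (ha.2 hcl), Finset.card_insert_of_notMem fun h => has (Finset.mem_filter.1 h).1,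
        eRk_insert_of_mem_closure hcl, Nat.cast_succ, add_right_comm]
    · rw [if_neg (mt ha.1 hcl), eRk_insert_eq_add_one ⟨hS (mem_insert a _), hcl⟩, add_assoc]

open scoped Classical in
theorem card_filter_isIntActive_add_eRk [DecidableEq α] (hσ : Function.Injective σ) {E : Finset α}
    (hE : M.E = E) {S : Finset α} (hS : S ⊆ E) :
    (((E \ S).filter (M.IsIntActive σ S)).card : ℕ∞) + M.eRk S = M.eRank := by
  have hX : (↑(E \ S) : Set α) ⊆ M✶.E := by simp [hE]
  have hdual := M.eRk_dual_add_eRank _ hX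
  rw [hE, ← Finset.coe_sdiff, Finset.sdiff_sdiff_eq_self hS, encard_coe_eq_coe_finsetCard] at hdual
  have hpred : M.IsIntActive σ S = M✶.IsExtActive σ ↑(E \ S) := by
    ext e; rw [IsIntActive, hE, Finset.coe_sdiff]
  have hfin : M✶.eRk ↑(E \ S) ≠ ⊤ := ne_top_of_le_ne_top (by simp) (M✶.eRk_le_encard _)
  have hsum : (((E \ S).filter (M.IsIntActive σ S)).card : ℕ∞) + M.eRk S + M✶.eRk ↑(E \ S) =
      M.eRank + M✶.eRk ↑(E \ S) := by
    rw [add_right_comm, hpred, card_filter_isExtActive_add_eRk hσ _ hX, add_comm, ← hdual, add_comm]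
  exact WithTop.add_right_cancel hfin hsum

end Matroid

namespace TutteActivities

section ActivityPair

variable {ι R : Type*} [DecidableEq ι] [CommSemiring R]

theorem sum_powerset_union_pow (u v s t : R) {I L : Finset ι} (hIL : Disjoint I L) :
    ∑ X ∈ (I ∪ L).powerset,
        u ^ (I ∩ X).card * v ^ (I \ X).card * s ^ (L ∩ X).card * t ^ (L \ X).card =
      (u + v) ^ I.card * (s + t) ^ L.card := by
  have hmem : ∀ i ∈ L, i ∉ I := fun i hi hi' => Finset.disjoint_left.1 hIL hi' hi
  calc _ = ∑ X ∈ (I ∪ L).powerset, (∏ i ∈ X, if i ∈ I then u else s) *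
        ∏ i ∈ (I ∪ L) \ X, if i ∈ I then v else t := by
        refine Finset.sum_congr rfl fun X hX => ?_
        have hX := Finset.mem_powerset.1 hX
        simp only [Finset.prod_ite, Finset.prod_const, Finset.filter_mem_eq_inter]
        have h₁ : X.filter (· ∉ I) = L ∩ X := by
          ext i; have := @hX i; have := hmem i; simp only [Finset.mem_filter, Finset.mem_inter,
            Finset.mem_union] at *; tauto
        have h₂ : (I ∪ L) \ X ∩ I = I \ X := by
          ext i; simp only [Finset.mem_sdiff, Finset.mem_inter, Finset.mem_union]; tauto
        have h₃ : ((I ∪ L) \ X).filter (· ∉ I) = L \ X := by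
          ext i; have := hmem i; simp only [Finset.mem_filter, Finset.mem_sdiff,
            Finset.mem_union] at *; tauto
        rw [h₁, h₂, h₃, Finset.inter_comm X I]
        ring
    _ = ∏ i ∈ I ∪ L, ((if i ∈ I then u else s) + if i ∈ I then v else t) :=
        (Finset.prod_add _ _ _).symm
    _ = _ := by
        rw [Finset.prod_union hIL, Finset.prod_eq_pow_card (b := u + v) fun i hi => by simp [hi],
          Finset.prod_eq_pow_card (b := s + t) fun i hi => by simp [hmem i hi]]

structure IsActivityPair (E : Finset ι) (I L : Finset ι → Finset ι) : Prop where
  subset_ground : ∀ S ⊆ E, I S ∪ L S ⊆ E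
  disjoint : ∀ S ⊆ E, Disjoint (I S) (L S)
  insert_eq_erase : ∀ S ⊆ E, ∀ e ∈ I S ∪ L S,
    I (insert e S) = I (S.erase e) ∧ L (insert e S) = L (S.erase e)

namespace IsActivityPair

variable {E S X : Finset ι} {I L : Finset ι → Finset ι} {e : ι}

theorem insert_eq (h : IsActivityPair E I L) (hS : S ⊆ E) (he : e ∈ I S ∪ L S) :
    I (insert e S) = I S ∧ L (insert e S) = L S := by
  by_cases heS : e ∈ S
  · simp [Finset.insert_eq_of_mem heS]
  · simpa [Finset.erase_eq_of_notMem heS] using h.insert_eq_erase S hS e he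

theorem erase_eq (h : IsActivityPair E I L) (hS : S ⊆ E) (he : e ∈ I S ∪ L S) :
    I (S.erase e) = I S ∧ L (S.erase e) = L S := by
  by_cases heS : e ∈ S
  · simpa [Finset.insert_eq_of_mem heS, eq_comm] using h.insert_eq_erase S hS e he
  · simp [Finset.erase_eq_of_notMem heS]

theorem union_eq (h : IsActivityPair E I L) (hS : S ⊆ E) (hX : X ⊆ I S ∪ L S) :
    I (S ∪ X) = I S ∧ L (S ∪ X) = L S := by
  induction X using Finset.induction_on with
  | empty => simp
  | insert a X _ ih =>
    obtain ⟨hI, hL⟩ := ih ((Finset.subset_insert a X).trans hX)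
    have hSX : S ∪ X ⊆ E := Finset.union_subset hS
      (((Finset.subset_insert a X).trans hX).trans (h.subset_ground S hS))
    have ha : a ∈ I (S ∪ X) ∪ L (S ∪ X) := hI ▸ hL ▸ hX (Finset.mem_insert_self a X)
    rw [Finset.union_insert, (h.insert_eq hSX ha).1, (h.insert_eq hSX ha).2, hI, hL]
    exact ⟨rfl, rfl⟩

theorem sdiff_eq (h : IsActivityPair E I L) (hS : S ⊆ E) (hX : X ⊆ I S ∪ L S) :
    I (S \ X) = I S ∧ L (S \ X) = L S := by
  induction X using Finset.induction_on with
  | empty => simp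
  | insert a X _ ih =>
    obtain ⟨hI, hL⟩ := ih ((Finset.subset_insert a X).trans hX)
    have hSX : S \ X ⊆ E := Finset.sdiff_subset.trans hS
    have ha : a ∈ I (S \ X) ∪ L (S \ X) := hI ▸ hL ▸ hX (Finset.mem_insert_self a X)
    rw [Finset.sdiff_insert, (h.erase_eq hSX ha).1, (h.erase_eq hSX ha).2, hI, hL]
    exact ⟨rfl, rfl⟩

theorem filter_sdiff_eq_image (h : IsActivityPair E I L) {K : Finset ι} (hKE : K ⊆ E)
    (hK : Disjoint K (I K ∪ L K)) :
    {T ∈ E.powerset | T \ (I T ∪ L T) = K} = (I K ∪ L K).powerset.image (K ∪ ·) := by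
  ext T
  simp only [Finset.mem_filter, Finset.mem_powerset, Finset.mem_image]
  constructor
  · rintro ⟨hTE, rfl⟩
    obtain ⟨hI, hL⟩ := h.sdiff_eq hTE (Finset.Subset.refl (I T ∪ L T))
    exact ⟨T ∩ (I T ∪ L T), by rw [hI, hL]; exact Finset.inter_subset_right,
      Finset.sdiff_union_inter T _⟩
  · rintro ⟨X, hX, rfl⟩
    obtain ⟨hI, hL⟩ := h.union_eq hKE hX
    refine ⟨Finset.union_subset hKE (hX.trans (h.subset_ground K hKE)), ?_⟩
    rw [hI, hL, Finset.union_sdiff_distrib, Finset.sdiff_eq_self_of_disjoint hK,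
      Finset.sdiff_eq_empty_iff_subset.2 hX, Finset.union_empty]

theorem sum_union_powerset (h : IsActivityPair E I L) {K : Finset ι} (hKE : K ⊆ E)
    (hK : Disjoint K (I K ∪ L K)) (u v s t : R) :
    ∑ X ∈ (I K ∪ L K).powerset, u ^ (I (K ∪ X) ∩ (K ∪ X)).card * v ^ (I (K ∪ X) \ (K ∪ X)).card *
        s ^ (L (K ∪ X) ∩ (K ∪ X)).card * t ^ (L (K ∪ X) \ (K ∪ X)).card =
      (u + v) ^ (I K).card * (s + t) ^ (L K).card := by
  have hrestrict : ∀ A ⊆ I K ∪ L K, ∀ X, A ∩ (K ∪ X) = A ∩ X ∧ A \ (K ∪ X) = A \ X := by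
    intro A hA X
    have hAK := (hK.mono_right hA).symm
    constructor <;> ext i <;> have := fun hi : i ∈ A => Finset.disjoint_left.1 hAK hi <;>
      simp only [Finset.mem_inter, Finset.mem_sdiff, Finset.mem_union] <;> tauto
  rw [← sum_powerset_union_pow u v s t (h.disjoint K hKE)]
  refine Finset.sum_congr rfl fun X hX => ?_
  obtain ⟨hI, hL⟩ := h.union_eq hKE (Finset.mem_powerset.1 hX)
  obtain ⟨hI₁, hI₂⟩ := hrestrict _ Finset.subset_union_left X
  obtain ⟨hL₁, hL₂⟩ := hrestrict _ Finset.subset_union_right X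
  rw [hI, hL, hI₁, hI₂, hL₁, hL₂]

theorem sum_pow_eq_sum_add_pow (h : IsActivityPair E I L) (u v s t : R) :
    ∑ S ∈ E.powerset,
        u ^ (I S ∩ S).card * v ^ (I S \ S).card * s ^ (L S ∩ S).card * t ^ (L S \ S).card =
      ∑ K ∈ E.powerset with Disjoint K (I K ∪ L K),
        (u + v) ^ (I K).card * (s + t) ^ (L K).card := by
  have hcore : ∀ S ∈ E.powerset,
      S \ (I S ∪ L S) ∈ {K ∈ E.powerset | Disjoint K (I K ∪ L K)} := by
    intro S hS
    have hSE := Finset.mem_powerset.1 hS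
    obtain ⟨hI, hL⟩ := h.sdiff_eq hSE (Finset.Subset.refl (I S ∪ L S))
    rw [Finset.mem_filter, Finset.mem_powerset, hI, hL]
    exact ⟨Finset.sdiff_subset.trans hSE, Finset.sdiff_disjoint⟩
  rw [← Finset.sum_fiberwise_of_maps_to hcore]
  refine Finset.sum_congr rfl fun K hK => ?_
  obtain ⟨hKE, hK⟩ := Finset.mem_filter.1 hK
  have hKE := Finset.mem_powerset.1 hKE
  rw [h.filter_sdiff_eq_image hKE hK, Finset.sum_image, h.sum_union_powerset hKE hK]
  intro X hX Y hY hXY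
  have hXK := (hK.mono_right (Finset.mem_powerset.1 hX)).symm
  have hYK := (hK.mono_right (Finset.mem_powerset.1 hY)).symm
  simpa [Finset.union_sdiff_left, Finset.sdiff_eq_self_of_disjoint hXK,
    Finset.sdiff_eq_self_of_disjoint hYK] using congrArg (· \ K) hXY

end IsActivityPair

end ActivityPair

variable {α : Type*} [DecidableEq α]

section ToMatroid

variable {E : Finset α} {ℬ : Finset (Finset α)}

def toMatroid (hM : IsMatroidOn E ℬ) : Matroid α :=
  Matroid.ofIsBaseOfFinite E.finite_toSet (fun B => ∃ B' ∈ ℬ, ↑B' = B)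
    (let ⟨B, hB⟩ := hM.1; ⟨B, B, hB, rfl⟩)
    (by
      rintro _ _ ⟨B₁, hB₁, rfl⟩ ⟨B₂, hB₂, rfl⟩ e he
      obtain ⟨f, hf, hB⟩ := hM.2.2 B₁ hB₁ B₂ hB₂ e (by simpa using he)
      exact ⟨f, by simpa using hf, _, hB, by simp⟩)
    (by rintro _ ⟨B, hB, rfl⟩; exact_mod_cast hM.2.1 B hB)

@[simp] theorem toMatroid_E (hM : IsMatroidOn E ℬ) : (toMatroid hM).E = E := rfl

theorem toMatroid_isBase_iff (hM : IsMatroidOn E ℬ) {B : Set α} :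
    (toMatroid hM).IsBase B ↔ ∃ B' ∈ ℬ, ↑B' = B :=
  Iff.rfl

theorem toMatroid_indep_iff (hM : IsMatroidOn E ℬ) {A : Finset α} :
    (toMatroid hM).Indep A ↔ Indep ℬ A := by
  simp only [Matroid.indep_iff, toMatroid_isBase_iff]
  constructor
  · rintro ⟨_, ⟨B, hB, rfl⟩, hAB⟩
    exact ⟨B, hB, Finset.coe_subset.1 hAB⟩
  · rintro ⟨B, hB, hAB⟩
    exact ⟨B, ⟨B, hB, rfl⟩, Finset.coe_subset.2 hAB⟩

theorem toMatroid_isCircuit_iff (hM : IsMatroidOn E ℬ) {C : Finset α} :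
    (toMatroid hM).IsCircuit C ↔ Circuit E ℬ C := by
  rw [Matroid.isCircuit_iff_forall_ssubset, Matroid.Dep, Finset.forall_ssubset_coe_iff]
  simp only [toMatroid_indep_iff, toMatroid_E, Finset.coe_subset, Circuit]
  tauto

theorem toMatroid_isCocircuit_iff (hM : IsMatroidOn E ℬ) {C : Finset α} :
    (toMatroid hM).IsCocircuit C ↔ Cocircuit E ℬ C := by
  have hmeet : ∀ D : Finset α, (∀ B, (toMatroid hM).IsBase B → ((D : Set α) ∩ B).Nonempty) ↔
      ∀ B ∈ ℬ, (B ∩ D).Nonempty := by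
    simp [toMatroid_isBase_iff, ← Finset.coe_inter, Finset.inter_comm]
  refine ⟨fun hC => ⟨by simpa using hC.subset_ground, ?_⟩, fun hC => ?_⟩
  · rw [Matroid.isCocircuit_iff_minimal, Set.minimal_iff_forall_ssubset,
      Finset.forall_ssubset_coe_iff] at hC
    simpa [hmeet, Finset.not_nonempty_iff_eq_empty] using hC
  · rw [Matroid.isCocircuit_iff_minimal, Set.minimal_iff_forall_ssubset,
      Finset.forall_ssubset_coe_iff]
    simpa [hmeet, Finset.not_nonempty_iff_eq_empty] using hC.2

theorem toMatroid_eRk (hM : IsMatroidOn E ℬ) {A : Finset α} (hA : A ⊆ E) :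
    (toMatroid hM).eRk A = rank ℬ A := by
  obtain ⟨I, hI⟩ := (toMatroid hM).exists_isBasis A (by simpa using hA)
  obtain ⟨_, ⟨B, hB, rfl⟩, rfl⟩ := hI.exists_isBase
  obtain ⟨B₀, hB₀, hr⟩ := Finset.exists_mem_eq_sup ℬ hM.1 fun B => (B ∩ A).card
  have hB₀A : (toMatroid hM).Indep ↑(B₀ ∩ A) :=
    (toMatroid_indep_iff hM).2 ⟨B₀, hB₀, Finset.inter_subset_left⟩
  have hle := hB₀A.encard_le_eRk_of_subset (Finset.coe_subset.2 Finset.inter_subset_right)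
  simp only [hI.eRk_eq_encard, ← Finset.coe_inter, Set.encard_coe_eq_coe_finsetCard] at hle ⊢
  rw [rank, hr]
  exact le_antisymm (Nat.cast_le.2 (hr ▸ Finset.le_sup (f := fun B => (B ∩ A).card) hB)) hle

theorem toMatroid_eRank (hM : IsMatroidOn E ℬ) : (toMatroid hM).eRank = rank ℬ E := by
  rw [Matroid.eRank_def, toMatroid_E, toMatroid_eRk hM subset_rfl]

variable {σ : α → ℕ} {S : Finset α} {e : α}

theorem mem_subL_iff (hM : IsMatroidOn E ℬ) :
    e ∈ subL E ℬ σ S ↔ (toMatroid hM).IsExtActive σ S e := by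
  rw [subL, Finset.mem_filter]
  simp only [IsMinOf]
  constructor
  · rintro ⟨-, C, hC, hCS, heC, hmin⟩
    exact ⟨C, by exact_mod_cast hCS, (toMatroid_isCircuit_iff hM).2 hC, heC, hmin⟩
  · rintro ⟨C, hCS, hC, heC, hmin⟩
    obtain ⟨C, rfl⟩ := (E.finite_toSet.subset hC.subset_ground).exists_finset_coe
    exact ⟨by simpa using hC.subset_ground heC, C, (toMatroid_isCircuit_iff hM).1 hC,
      by exact_mod_cast hCS, heC, hmin⟩

theorem mem_subI_iff (hM : IsMatroidOn E ℬ) :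
    e ∈ subI E ℬ σ S ↔ (toMatroid hM).IsIntActive σ S e := by
  rw [subI, Finset.mem_filter]
  simp only [IsMinOf, Matroid.IsIntActive, Matroid.IsExtActive]
  constructor
  · rintro ⟨-, C, hC, hCS, heC, hmin⟩
    exact ⟨C, by simpa using Finset.coe_subset.2 hCS, (toMatroid_isCocircuit_iff hM).2 hC, heC,
      hmin⟩
  · rintro ⟨C, hCS, hC, heC, hmin⟩
    obtain ⟨C, rfl⟩ := (E.finite_toSet.subset hC.subset_ground).exists_finset_coe
    exact ⟨by simpa using hC.subset_ground heC, C, (toMatroid_isCocircuit_iff hM).1 hC,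
      Finset.coe_subset.1 (by simpa using hCS), heC, hmin⟩

theorem card_subL_inter_add_rank (hM : IsMatroidOn E ℬ) (hσ : Function.Injective σ) (hS : S ⊆ E) :
    (subL E ℬ σ S ∩ S).card + rank ℬ S = S.card := by
  classical
  have hcount := Matroid.card_filter_isExtActive_add_eRk (M := toMatroid hM) hσ S
    (by simpa using hS)
  have hfilter : subL E ℬ σ S ∩ S = S.filter ((toMatroid hM).IsExtActive σ S) := by
    ext f; rw [Finset.mem_inter, Finset.mem_filter, mem_subL_iff hM, and_comm]
  rw [toMatroid_eRk hM hS, ← hfilter] at hcount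
  exact_mod_cast hcount

theorem card_subI_sdiff_add_rank (hM : IsMatroidOn E ℬ) (hσ : Function.Injective σ) (hS : S ⊆ E) :
    (subI E ℬ σ S \ S).card + rank ℬ S = rank ℬ E := by
  classical
  have hcount := Matroid.card_filter_isIntActive_add_eRk (M := toMatroid hM) hσ rfl hS
  have hfilter : subI E ℬ σ S \ S = (E \ S).filter ((toMatroid hM).IsIntActive σ S) := by
    ext f
    rw [Finset.mem_sdiff, Finset.mem_filter, Finset.mem_sdiff, mem_subI_iff hM]
    exact ⟨fun ⟨hf, hfS⟩ => ⟨⟨by simpa using hf.mem_ground, hfS⟩, hf⟩,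
      fun ⟨⟨_, hfS⟩, hf⟩ => ⟨hf, hfS⟩⟩
  rw [toMatroid_eRk hM hS, toMatroid_eRank hM, ← hfilter] at hcount
  exact_mod_cast hcount

theorem isActivityPair (hM : IsMatroidOn E ℬ) (hσ : Function.Injective σ) :
    IsActivityPair E (subI E ℬ σ) (subL E ℬ σ) where
  subset_ground _ _ := Finset.union_subset (Finset.filter_subset _ _) (Finset.filter_subset _ _)
  disjoint _ _ := Finset.disjoint_right.2 fun _ he he' =>
    ((mem_subL_iff hM).1 he).not_isIntActive ((mem_subI_iff hM).1 he')
  insert_eq_erase S hS e he := by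
    have hS' : (S : Set α) ⊆ (toMatroid hM).E := by simpa using hS
    simp only [Finset.ext_iff, mem_subI_iff hM, mem_subL_iff hM, Finset.coe_insert,
      Finset.coe_erase]
    rcases Finset.mem_union.1 he with he | he
    · rw [mem_subI_iff hM] at he
      exact ⟨fun f => he.isIntActive_insert_iff hσ, fun f => he.isExtActive_insert_iff hσ hS'⟩
    · rw [mem_subL_iff hM] at he
      exact ⟨fun f => he.isIntActive_insert_iff hσ, fun f => he.isExtActive_insert_iff hσ⟩

end ToMatroid

/-- The Gordon–Traldi four-variable subset expansion of the Tutte polynomial. -/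
theorem gordon_traldi_four_variable_expansion
    (E : Finset α) (ℬ : Finset (Finset α)) (hM : IsMatroidOn E ℬ)
    (σ : α → ℕ) (hσ : Function.Injective σ) (x w y z : ℤ) :
    ∑ S ∈ E.powerset,
        x ^ (subI E ℬ σ S ∩ S).card * w ^ (subI E ℬ σ S \ S).card *
          y ^ (subL E ℬ σ S ∩ S).card * z ^ (subL E ℬ σ S \ S).card =
      tutte E ℬ (x + w) (y + z) := by
  have hpair := isActivityPair hM hσ
  calc
    _ = ∑ S ∈ E.powerset, 1 ^ (subI E ℬ σ S ∩ S).card * (x + w - 1) ^ (subI E ℬ σ S \ S).card *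
          (y + z - 1) ^ (subL E ℬ σ S ∩ S).card * 1 ^ (subL E ℬ σ S \ S).card := by
      rw [hpair.sum_pow_eq_sum_add_pow, hpair.sum_pow_eq_sum_add_pow, add_sub_cancel,
        sub_add_cancel]
    _ = tutte E ℬ (x + w) (y + z) := by
      refine Finset.sum_congr rfl fun S hS => ?_
      have hSE := Finset.mem_powerset.1 hS
      have hcorank := card_subI_sdiff_add_rank hM hσ hSE
      have hnullity := card_subL_inter_add_rank hM hσ hSE
      rw [show rank ℬ E - rank ℬ S = (subI E ℬ σ S \ S).card by omega,
        show S.card - rank ℬ S = (subL E ℬ σ S ∩ S).card by omega]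
      ring

end TutteActivities
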